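/- arXiv:1304.4243 — 8 statements merged into one kernel-verified Lean document; each statement's English description precedes it below -/
import Mathlib

section
/- Let P be an uncertain point set of n points each with k locations in ℝ^d, let 𝒜 be a family of ranges, and let T ⊆ P. Then T is an ε-RE coreset for (P, 𝒜) if and only if T_cert ⊆ P_cert is an ε-sample for (P_cert, 𝒜). -/
open Finset
open scoped Classical

noncomputable section

/-- The probability that an uncertain point with `k` possible locations `p 0, …, p (k-1)`,
each taken with probability `1/k`, lies in the range `r`. -/
def probIn {α : Type*} {k : ℕ} (p : Fin k → α) (r : Set α) : ℝ :=
  ((Finset.univ.filter fun j => p j ∈ r).card : ℝ) / k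

/-- `E_{r(S)}`: the expected fraction of the uncertain points indexed by `S`
that lie in the range `r`, for the uncertain point set `P`. -/
def REexp {α : Type*} {n k : ℕ} (P : Fin n → Fin k → α) (S : Finset (Fin n)) (r : Set α) : ℝ :=
  (∑ i ∈ S, probIn (P i) r) / S.card

/-- `T` is an `ε`-RE coreset of `(P, 𝒜)`. -/
def IsREcoreset {α : Type*} {n k : ℕ} (P : Fin n → Fin k → α) (T : Finset (Fin n))
    (𝒜 : Set (Set α)) (ε : ℝ) : Prop :=
  ∀ r ∈ 𝒜, |REexp P Finset.univ r - REexp P T r| ≤ ε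

/-- `S` is an `ε`-sample of the range space `(X, 𝒜)`. -/
def IsEpsSample {α : Type*} (X S : Finset α) (𝒜 : Set (Set α)) (ε : ℝ) : Prop :=
  ∀ r ∈ 𝒜, |((X.filter fun x => x ∈ r).card : ℝ) / X.card -
    ((S.filter fun x => x ∈ r).card : ℝ) / S.card| ≤ ε

/-- `P_cert`: the set of all `n · k` possible locations of the uncertain point set `P`. -/
def Pcert {α : Type*} {n k : ℕ} (P : Fin n → Fin k → α) : Finset α :=
  Finset.univ.image fun q : Fin n × Fin k => P q.1 q.2

/-- `T_cert`: the set of all possible locations of the uncertain points indexed by `T`. -/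
def Tcert {α : Type*} {n k : ℕ} (P : Fin n → Fin k → α) (T : Finset (Fin n)) : Finset α :=
  (T ×ˢ (Finset.univ : Finset (Fin k))).image fun q : Fin n × Fin k => P q.1 q.2

lemma key {n k : ℕ} {α : Type*} (hk : 0 < k) (P : Fin n → Fin k → α)
    (hinj : Function.Injective fun q : Fin n × Fin k => P q.1 q.2)
    (S : Finset (Fin n)) (r : Set α) :
    REexp P S r =
      ((((S ×ˢ (Finset.univ : Finset (Fin k))).image fun q : Fin n × Fin k => P q.1 q.2).filter
          (fun x => x ∈ r)).card : ℝ) /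
        (((S ×ˢ (Finset.univ : Finset (Fin k))).image fun q : Fin n × Fin k => P q.1 q.2).card : ℝ) := by
  unfold REexp probIn
  rw [Finset.filter_image, Finset.card_image_of_injective _ hinj,
    Finset.card_image_of_injective _ hinj, Finset.card_product, Finset.card_univ, Fintype.card_fin]
  have h1 : ((S ×ˢ (Finset.univ : Finset (Fin k))).filter
      fun q : Fin n × Fin k => (fun x => x ∈ r) (P q.1 q.2)).card
      = ∑ i ∈ S, (Finset.univ.filter fun j => P i j ∈ r).card := by
    rw [Finset.card_filter, Finset.sum_product]
    simp only [Finset.card_filter]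
  rw [h1]
  push_cast
  rw [← Finset.sum_div, div_div, mul_comm]

/-- `T ⊆ P` is an `ε`-RE coreset for `(P, 𝒜)` iff
`T_cert ⊆ P_cert` is an `ε`-sample for `(P_cert, 𝒜)`. -/
theorem stmt0 {n k d : ℕ} (hn : 0 < n) (hk : 0 < k)
    (P : Fin n → Fin k → (Fin d → ℝ))
    (hinj : Function.Injective fun q : Fin n × Fin k => P q.1 q.2)
    (𝒜 : Set (Set (Fin d → ℝ))) (T : Finset (Fin n)) (ε : ℝ) :
    IsREcoreset P T 𝒜 ε ↔ IsEpsSample (Pcert P) (Tcert P T) 𝒜 ε := by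
  have hP : Pcert P = Tcert P Finset.univ := by
    unfold Pcert Tcert; rw [Finset.univ_product_univ]
  unfold IsREcoreset IsEpsSample
  refine forall₂_congr fun r hr => ?_
  rw [hP]
  unfold Tcert
  rw [← key hk P hinj Finset.univ r, ← key hk P hinj T r]

end
end

section
/- Let P be an uncertain point set of n points each with k locations in ℝ^d and let 𝒜 be a family of ranges. If T ⊆ P is such that the canonical transversal T_j is an ε-sample for (P_j, 𝒜) for every j ∈ [k], then T is an ε-RE coreset for (P, 𝒜). -/
open Finset
open scoped Classical

noncomputable section

/-- The points of `f` indexed by `S` form an `ε`-sample of the point set given by `f`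
(with respect to the family `𝒜`). -/
def IsEpsSampleIdx {α : Type*} {n : ℕ} (f : Fin n → α) (S : Finset (Fin n))
    (𝒜 : Set (Set α)) (ε : ℝ) : Prop :=
  ∀ r ∈ 𝒜, |((Finset.univ.filter fun i => f i ∈ r).card : ℝ) / n -
    ((S.filter fun i => f i ∈ r).card : ℝ) / S.card| ≤ ε

/-- If for every `j ∈ [k]` the `j`-th canonical transversal `T_j`
is an `ε`-sample for `(P_j, 𝒜)`, then `T` is an `ε`-RE coreset for `(P, 𝒜)`. -/
theorem stmt1 {n k d : ℕ} (hn : 0 < n) (hk : 0 < k)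
    (P : Fin n → Fin k → (Fin d → ℝ)) (𝒜 : Set (Set (Fin d → ℝ)))
    (T : Finset (Fin n)) (ε : ℝ)
    (h : ∀ j : Fin k, IsEpsSampleIdx (fun i => P i j) T 𝒜 ε) :
    IsREcoreset P T 𝒜 ε := by
  have key : ∀ (S : Finset (Fin n)) (r : Set (Fin d → ℝ)),
      REexp P S r = (∑ j : Fin k, ((S.filter fun i => P i j ∈ r).card : ℝ) / S.card) / k := by
    intro S r
    unfold REexp probIn
    have hswap : (∑ i ∈ S, ((Finset.univ.filter fun j => P i j ∈ r).card : ℝ))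
        = ∑ j : Fin k, ((S.filter fun i => P i j ∈ r).card : ℝ) := by
      simp only [Finset.card_filter]
      push_cast
      exact Finset.sum_comm
    rw [← Finset.sum_div, hswap, ← Finset.sum_div, div_div, div_div, mul_comm]
  intro r hr
  rw [key Finset.univ r, key T r, div_sub_div_same]
  rw [← Finset.sum_sub_distrib]
  have hbound : |∑ j : Fin k, (((Finset.univ.filter fun i => P i j ∈ r).card : ℝ) /
        (Finset.univ : Finset (Fin n)).card
      - ((T.filter fun i => P i j ∈ r).card : ℝ) / T.card)| ≤ k * ε := by
    calc |∑ j : Fin k, (((Finset.univ.filter fun i => P i j ∈ r).card : ℝ) /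
            (Finset.univ : Finset (Fin n)).card
          - ((T.filter fun i => P i j ∈ r).card : ℝ) / T.card)|
        ≤ ∑ j : Fin k, |(((Finset.univ.filter fun i => P i j ∈ r).card : ℝ) /
            (Finset.univ : Finset (Fin n)).card
          - ((T.filter fun i => P i j ∈ r).card : ℝ) / T.card)| :=
          Finset.abs_sum_le_sum_abs _ _
      _ ≤ ∑ _j : Fin k, ε := by
          apply Finset.sum_le_sum
          intro j _
          have := h j r hr
          simpa [Finset.card_univ] using this
      _ = k * ε := by simp [mul_comm]
  rw [abs_div, abs_of_nonneg (by positivity : (0:ℝ) ≤ (k:ℝ))]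
  rw [div_le_iff₀ (by positivity)]
  calc |∑ j : Fin k, _| ≤ k * ε := hbound
    _ = ε * k := mul_comm _ _

end
end

section
/- Let P be an uncertain point set of n points each with k locations in ℝ^d, let 𝒜 be a family of ranges, and let χ : P → {−1,+1} be any coloring with |P_χ^+| = n/2. Then RE-disc_χ(P, 𝒜) = (1/k) · disc_{χ_cert}(P_cert, 𝒜). -/
open Finset
open scoped Classical

noncomputable section

/-- `P_χ^+`: the uncertain points colored `+1` by `χ`. -/
def Pplus {n : ℕ} (χ : Fin n → ℤ) : Finset (Fin n) :=
  Finset.univ.filter fun i => χ i = 1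

/-- `RE-disc_χ(P, r) = |P| · |E_{r(P_χ^+)} - E_{r(P)}|`. -/
def REdisc {α : Type*} {n k : ℕ} (P : Fin n → Fin k → α) (χ : Fin n → ℤ) (r : Set α) : ℝ :=
  n * |REexp P (Pplus χ) r - REexp P Finset.univ r|

/-- `disc_{χ_cert}(P_cert, r)`: the discrepancy on `P_cert` of the coloring `χ_cert`
induced by `χ` (namely `χ_cert(p_{i,j}) = χ(p_i)`), for the range `r`. -/
def discCert {α : Type*} {n k : ℕ} (P : Fin n → Fin k → α) (χ : Fin n → ℤ) (r : Set α) : ℝ :=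
  |∑ q ∈ (Finset.univ : Finset (Fin n × Fin k)).filter (fun q => P q.1 q.2 ∈ r),
    (χ q.1 : ℝ)|

lemma stmt4_pointwise {n k d : ℕ} (hn : 0 < n) (hk : 0 < k)
    (P : Fin n → Fin k → (Fin d → ℝ))
    (χ : Fin n → ℤ) (hχ : ∀ i, χ i = 1 ∨ χ i = -1)
    (hbal : 2 * (Pplus χ).card = n) (r : Set (Fin d → ℝ)) :
    REdisc P χ r = (1 / k) * discCert P χ r := by
  set c : Fin n → ℝ := fun i => ((Finset.univ.filter fun j => P i j ∈ r).card : ℝ) with hc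
  have hm : (Pplus χ).card ≠ 0 := by omega
  have hmR : ((Pplus χ).card : ℝ) ≠ 0 := Nat.cast_ne_zero.mpr hm
  have hkR : (k : ℝ) ≠ 0 := Nat.cast_ne_zero.mpr hk.ne'
  have hnm : (n : ℝ) = 2 * ((Pplus χ).card : ℝ) := by exact_mod_cast hbal.symm
  have hnR : (0:ℝ) ≤ (n : ℝ) := Nat.cast_nonneg n
  set Sp : ℝ := ∑ i ∈ Pplus χ, c i with hSp
  set St : ℝ := ∑ i, c i with hSt
  -- rewrite discCert
  have hdisc : discCert P χ r = |∑ i, (χ i : ℝ) * c i| := by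
    unfold discCert
    congr 1
    rw [Finset.sum_filter, Fintype.sum_prod_type]
    refine Finset.sum_congr rfl fun i _ => ?_
    rw [← Finset.sum_filter]
    simp [hc, mul_comm]
  have hterm : ∀ i, (χ i : ℝ) * c i = 2 * (if i ∈ Pplus χ then c i else 0) - c i := by
    intro i
    by_cases h : i ∈ Pplus χ
    · have h1 : χ i = 1 := by simpa [Pplus] using h
      simp [h, h1]; ring
    · have h1 : χ i = -1 := by
        rcases hχ i with h1 | h1
        · exact absurd (by simp [Pplus, h1]) h
        · exact h1
      simp [h, h1]
  have hsum : ∑ i, (χ i : ℝ) * c i = 2 * Sp - St := by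
    simp only [hterm]
    rw [Finset.sum_sub_distrib, ← Finset.mul_sum, Finset.sum_ite_mem, Finset.univ_inter]
  have key : (n : ℝ) * ((Sp / k) / ((Pplus χ).card : ℝ) - (St / k) / (n : ℝ))
      = (2 * Sp - St) / k := by
    rw [hnm]
    field_simp
  have hcc : ∀ i, ((Finset.univ.filter fun j => P i j ∈ r).card : ℝ) = c i := fun _ => rfl
  have hcard : (((Finset.univ : Finset (Fin n))).card : ℝ) = (n : ℝ) := by simp
  have main : (n : ℝ) * |(Sp / k) / ((Pplus χ).card : ℝ) - (St / k) / (n : ℝ)|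
      = (1 / k) * |2 * Sp - St| := by
    calc (n : ℝ) * |(Sp / k) / ((Pplus χ).card : ℝ) - (St / k) / (n : ℝ)|
        = |(n : ℝ) * ((Sp / k) / ((Pplus χ).card : ℝ) - (St / k) / (n : ℝ))| := by
          rw [abs_mul, abs_of_nonneg hnR]
      _ = |(2 * Sp - St) / k| := by rw [key]
      _ = (1 / k) * |2 * Sp - St| := by
          rw [abs_div, (abs_of_nonneg (Nat.cast_nonneg k) : |(k:ℝ)| = k), ← one_div_mul_eq_div]
  unfold REdisc REexp probIn
  rw [hdisc, hsum]
  simp only [hcc, ← Finset.sum_div, ← hSp, ← hSt, hcard]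
  exact main

/-- For any balanced `±1` coloring `χ` of the uncertain points,
`RE-disc_χ(P, 𝒜) = (1/k) · disc_{χ_cert}(P_cert, 𝒜)`. -/
theorem stmt4 {n k d : ℕ} (hn : 0 < n) (hk : 0 < k)
    (P : Fin n → Fin k → (Fin d → ℝ))
    (hinj : Function.Injective fun q : Fin n × Fin k => P q.1 q.2)
    (𝒜 : Set (Set (Fin d → ℝ)))
    (χ : Fin n → ℤ) (hχ : ∀ i, χ i = 1 ∨ χ i = -1)
    (hbal : 2 * (Pplus χ).card = n) :
    (⨆ r ∈ 𝒜, REdisc P χ r) = (1 / k) * ⨆ r ∈ 𝒜, discCert P χ r := by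
  have hpt : ∀ r, REdisc P χ r = (1 / k) * discCert P χ r :=
    stmt4_pointwise hn hk P χ hχ hbal
  have hpos : (0:ℝ) ≤ 1 / (k:ℝ) := by positivity
  calc (⨆ r ∈ 𝒜, REdisc P χ r) = ⨆ r ∈ 𝒜, (1 / (k:ℝ)) * discCert P χ r := by
        simp only [hpt]
    _ = (1 / k) * ⨆ r ∈ 𝒜, discCert P χ r := by
        rw [Real.mul_iSup_of_nonneg hpos]
        exact iSup_congr fun r => (Real.mul_iSup_of_nonneg hpos _).symm

end
end

section
/- Let P be an uncertain point set of n points each with k locations in ℝ^d, let 𝒜 be a family of ranges, and let χ : P → {−1,+1} be any coloring with |P_χ^+| = n/2. Then RE-disc_χ(P, 𝒜) ≤ max_{j∈[k]} disc_{χ_cert}(P_j, 𝒜), where P_j is the j-th canonical transversal of P. -/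
open Finset
open scoped Classical

noncomputable section

/-- The discrepancy of the coloring `χ` on the point set `f 0, …, f (n-1)` in range `r`
(used for the canonical transversal `P_j` with its coloring induced from `χ`). -/
def discIdx {α : Type*} {n : ℕ} (f : Fin n → α) (χ : Fin n → ℤ) (r : Set α) : ℝ :=
  |∑ i ∈ Finset.univ.filter (fun i => f i ∈ r), (χ i : ℝ)|

/-!
Writing `E_{r(S)}` as an average over `S` and using `|P_χ^+| = n/2`, the quantity
`n · (E_{r(P_χ^+)} - E_{r(P)})` equals `∑ᵢ χ(pᵢ) · Pr[pᵢ ∈ r]`. Expanding each probability as an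
average over the `k` locations and exchanging the two sums turns this into the average over `j` of
the signed counts `∑_{pᵢⱼ ∈ r} χ(pᵢ)`, whose absolute values are the discrepancies of the canonical
transversals `P_j`. An average is at most a maximum.
-/

open scoped BigOperators

lemma Finset.expect_le_of_nonneg {ι β : Type*} [AddCommMonoid β] [PartialOrder β]
    [IsOrderedAddMonoid β] [Module ℚ≥0 β] [PosSMulMono ℚ≥0 β] {s : Finset ι} {f : ι → β} {a : β}
    (h : ∀ i ∈ s, f i ≤ a) (ha : 0 ≤ a) : 𝔼 i ∈ s, f i ≤ a := by
  rcases s.eq_empty_or_nonempty with rfl | hs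
  · simpa using ha
  · exact expect_le hs h

section UncertainPoints

variable {α : Type*} {n k : ℕ}

lemma probIn_eq_expect (p : Fin k → α) (r : Set α) :
    probIn p r = 𝔼 j, if p j ∈ r then (1 : ℝ) else 0 := by
  rw [expect_eq_sum_div_card, probIn, sum_boole, card_univ, Fintype.card_fin]

lemma sum_mul_probIn_eq_expect {ι : Type*} [Fintype ι] (P : ι → Fin k → α) (w : ι → ℝ)
    (r : Set α) :
    ∑ i, w i * probIn (P i) r = 𝔼 j, ∑ i ∈ univ.filter (fun i => P i j ∈ r), w i := by
  simp_rw [probIn_eq_expect, mul_expect, mul_ite, mul_one, mul_zero, sum_filter]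
  exact (expect_sum_comm _ _ _).symm

lemma card_mul_REexp (P : Fin n → Fin k → α) (S : Finset (Fin n)) (r : Set α) :
    (#S : ℝ) * REexp P S r = ∑ i ∈ S, probIn (P i) r := by
  rw [REexp, ← expect_eq_sum_div_card, card_mul_expect]

lemma sum_sign_mul_eq {χ : Fin n → ℤ} (hχ : ∀ i, χ i = 1 ∨ χ i = -1) (f : Fin n → ℝ) :
    ∑ i, (χ i : ℝ) * f i = 2 * ∑ i ∈ Pplus χ, f i - ∑ i, f i := by
  have hsign : ∀ i, (χ i : ℝ) = 2 * (if χ i = 1 then 1 else 0) - 1 := fun i => by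
    rcases hχ i with h | h <;> norm_num [h]
  simp_rw [hsign, sub_mul, sum_sub_distrib, one_mul, mul_assoc, ← mul_sum, ite_mul, one_mul,
    zero_mul, ← sum_filter, Pplus]

lemma REdisc_eq_abs_sum_sign_mul_probIn (P : Fin n → Fin k → α) {χ : Fin n → ℤ}
    (hχ : ∀ i, χ i = 1 ∨ χ i = -1) (hbal : 2 * #(Pplus χ) = n) (r : Set α) :
    REdisc P χ r = |∑ i, (χ i : ℝ) * probIn (P i) r| := by
  have hplus : (n : ℝ) * REexp P (Pplus χ) r = 2 * ∑ i ∈ Pplus χ, probIn (P i) r := by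
    rw [← card_mul_REexp, ← mul_assoc, ← Nat.cast_ofNat, ← Nat.cast_mul, hbal]
  have huniv : (n : ℝ) * REexp P univ r = ∑ i, probIn (P i) r := by
    simpa using card_mul_REexp P univ r
  rw [REdisc, ← abs_of_nonneg (Nat.cast_nonneg (α := ℝ) n), ← abs_mul, mul_sub, hplus, huniv,
    sum_sign_mul_eq hχ]

lemma REdisc_le_expect_discIdx (P : Fin n → Fin k → α) {χ : Fin n → ℤ}
    (hχ : ∀ i, χ i = 1 ∨ χ i = -1) (hbal : 2 * #(Pplus χ) = n) (r : Set α) :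
    REdisc P χ r ≤ 𝔼 j, discIdx (fun i => P i j) χ r := by
  rw [REdisc_eq_abs_sum_sign_mul_probIn P hχ hbal, sum_mul_probIn_eq_expect]
  exact abs_expect_le _ _

lemma discIdx_le_sum_abs (f : Fin n → α) (χ : Fin n → ℤ) (r : Set α) :
    discIdx f χ r ≤ ∑ i, |(χ i : ℝ)| :=
  (abs_sum_le_sum_abs _ _).trans
    (sum_le_sum_of_subset_of_nonneg (filter_subset _ _) fun _ _ _ => abs_nonneg _)

end UncertainPoints

theorem stmt5_general {n k d : ℕ}
    (P : Fin n → Fin k → (Fin d → ℝ))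
    (𝒜 : Set (Set (Fin d → ℝ)))
    (χ : Fin n → ℤ) (hχ : ∀ i, χ i = 1 ∨ χ i = -1)
    (hbal : 2 * (Pplus χ).card = n) :
    (⨆ r ∈ 𝒜, REdisc P χ r) ≤ ⨆ j : Fin k, ⨆ r ∈ 𝒜, discIdx (fun i => P i j) χ r := by
  set M := ⨆ j : Fin k, ⨆ r ∈ 𝒜, discIdx (fun i => P i j) χ r
  have hM : 0 ≤ M :=
    Real.iSup_nonneg fun _ => Real.iSup_nonneg fun _ => Real.iSup_nonneg fun _ => abs_nonneg _
  have hdisc : ∀ j, ∀ r ∈ 𝒜, discIdx (fun i => P i j) χ r ≤ M := by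
    refine fun j r hr => le_trans ?_ (le_ciSup (Set.finite_range _).bddAbove j)
    refine le_ciSup₂ (f := fun r (_ : r ∈ 𝒜) => discIdx (fun i => P i j) χ r)
      ⟨∑ i, |(χ i : ℝ)|, ?_⟩ r hr
    rintro _ ⟨_, ⟨r, rfl⟩, ⟨_, rfl⟩⟩
    exact discIdx_le_sum_abs _ χ r
  refine Real.iSup_le (fun r => Real.iSup_le (fun hr => ?_) hM) hM
  exact (REdisc_le_expect_discIdx P hχ hbal r).trans
    (expect_le_of_nonneg (fun j _ => hdisc j r hr) hM)

/-- For any balanced `±1` coloring `χ` of the uncertain points,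
`RE-disc_χ(P, 𝒜) ≤ max_{j ∈ [k]} disc_{χ_cert}(P_j, 𝒜)` where `P_j` is the `j`-th
canonical transversal. -/
theorem stmt5 {n k d : ℕ} (hn : 0 < n) (hk : 0 < k)
    (P : Fin n → Fin k → (Fin d → ℝ))
    (hinj : Function.Injective fun q : Fin n × Fin k => P q.1 q.2)
    (𝒜 : Set (Set (Fin d → ℝ)))
    (χ : Fin n → ℤ) (hχ : ∀ i, χ i = 1 ∨ χ i = -1)
    (hbal : 2 * (Pplus χ).card = n) :
    (⨆ r ∈ 𝒜, REdisc P χ r) ≤ ⨆ j : Fin k, ⨆ r ∈ 𝒜, discIdx (fun i => P i j) χ r :=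
  stmt5_general P 𝒜 χ hχ hbal

end
end

section
/- There is an absolute constant C > 0 such that for every uncertain point set P of n points (n ≥ 2) each with k locations in ℝ¹, RE-disc(P, 𝓘₊) ≤ C·√k·log n, where 𝓘₊ is the family of one-sided intervals (−∞, x]. -/
open Finset
open scoped Classical

noncomputable section

/-- `𝓘₊`: the family of one-sided intervals `(-∞, x] ⊆ ℝ`. -/
def IicFam : Set (Set ℝ) := {r | ∃ x : ℝ, r = Set.Iic x}

/-!
Write `g i x` for the probability that `p_i` lies in `(-∞, x]`: each `g i` is monotone with
values in `[0, 1]`. If `w ∈ {0,1}ⁿ` is the indicator of the points colored `+1` and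
`w₀ ≡ ⌊n/2⌋ / n`, the discrepancy at `(-∞, x]` is `n / ⌊n/2⌋ ≤ 3` times
`|∑ i, (w i - w₀ i) * g i x|`.

We round `w₀` to a vertex of the cube by iterated linear rounding. When `a` coordinates are
fractional, split the range `[0, a]` of their total mass `∑ g i` into about `a / 4` windows of
length `4` and pick one checkpoint in each window. Moving inside the cube along the kernel of the
about `a / 4 + 2` linear constraints (the total weight, and `∑ w i * g i t` at every checkpoint
`t`) leaves at most `a / 4 + 2` fractional coordinates. Between a point and the checkpoint of its
window the monotone `g i` change by total mass less than `4`, so one round costs at most `4`.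
After `O(log n)` rounds, integrality of the total weight forces the last fractional coordinate
to be `0` or `1`. The bound is `O(log n)`, independent of `k`.
-/

def exitTime (a d : ℝ) : ℝ := if 0 < d then (1 - a) / d else -a / d

lemma exitTime_pos {a d : ℝ} (ha : a ∈ Set.Ioo 0 1) (hd : d ≠ 0) : 0 < exitTime a d := by
  unfold exitTime
  split_ifs with h
  · exact div_pos (by linarith [ha.2]) h
  · exact div_pos_of_neg_of_neg (by linarith [ha.1]) (lt_of_le_of_ne (not_lt.1 h) hd)

lemma add_mul_mem_Icc_of_le_exitTime {a d t : ℝ} (ha : a ∈ Set.Icc 0 1) (hd : d ≠ 0)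
    (ht₀ : 0 ≤ t) (ht : t ≤ exitTime a d) : a + t * d ∈ Set.Icc 0 1 := by
  unfold exitTime at ht
  split_ifs at ht with h
  · rw [le_div_iff₀ h] at ht
    exact ⟨by nlinarith [ha.1], by linarith⟩
  · rw [le_div_iff_of_neg (lt_of_le_of_ne (not_lt.1 h) hd)] at ht
    exact ⟨by linarith, by nlinarith [ha.2]⟩

lemma add_exitTime_mul_notMem_Ioo (a : ℝ) {d : ℝ} (hd : d ≠ 0) :
    a + exitTime a d * d ∉ Set.Ioo 0 1 := by
  unfold exitTime
  split_ifs <;> simp [div_mul_cancel₀ _ hd]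

lemma sum_abs_sub_eq_abs_sum_sub {ι α : Type*} [LinearOrder α] {g : ι → α → ℝ}
    (hg : ∀ i, Monotone (g i)) (F : Finset ι) (x y : α) :
    ∑ i ∈ F, |g i x - g i y| = |∑ i ∈ F, g i x - ∑ i ∈ F, g i y| := by
  rw [← sum_sub_distrib]
  rcases le_total y x with h | h
  · rw [abs_sum_of_nonneg fun i _ => sub_nonneg.2 (hg i h)]
    exact sum_congr rfl fun i _ => abs_of_nonneg (sub_nonneg.2 (hg i h))
  · rw [← abs_neg, ← sum_neg_distrib, abs_sum_of_nonneg fun i _ => by simpa using hg i h]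
    exact sum_congr rfl fun i _ => abs_of_nonpos (sub_nonpos.2 (hg i h))

lemma exists_finset_abs_sub_lt_one {α : Type*} (f : α → ℝ) (m : ℕ)
    (hf : ∀ x, f x ∈ Set.Ico 0 ((m : ℝ) + 1)) :
    ∃ T : Finset α, T.card ≤ m + 1 ∧ ∀ x, ∃ t ∈ T, |f x - f t| < 1 := by
  let S := (range (m + 1)).filter fun s => ∃ x, ⌊f x⌋₊ = s
  have hS : ∀ s : S, ∃ x, ⌊f x⌋₊ = s := fun s => (mem_filter.1 s.2).2
  choose t ht using hS
  refine ⟨univ.image t, card_image_le.trans ?_, fun x => ?_⟩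
  · simpa using card_filter_le (range (m + 1)) _
  have hx : ⌊f x⌋₊ ∈ S :=
    mem_filter.2 ⟨mem_range.2 ((Nat.floor_lt (hf x).1).2 (by exact_mod_cast (hf x).2)), x, rfl⟩
  refine ⟨t ⟨_, hx⟩, mem_image_of_mem _ (mem_univ _), Int.abs_sub_lt_one_of_floor_eq_floor ?_⟩
  rw [← Int.natCast_floor_eq_floor (hf x).1, ← Int.natCast_floor_eq_floor (hf _).1, ht]

section Rounding

variable {ι : Type*} [Fintype ι]

def fracSupport (w : ι → ℝ) : Finset ι := univ.filter fun i => w i ∈ Set.Ioo 0 1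

@[simp]
lemma mem_fracSupport {w : ι → ℝ} {i : ι} : i ∈ fracSupport w ↔ w i ∈ Set.Ioo 0 1 := by
  simp [fracSupport]

lemma eq_zero_or_eq_one_of_notMem_fracSupport {w : ι → ℝ} {i : ι} (hw : w i ∈ Set.Icc 0 1)
    (hi : i ∉ fracSupport w) : w i = 0 ∨ w i = 1 := by
  rw [mem_fracSupport] at hi
  rcases hw.1.eq_or_lt with h0 | h0
  · exact Or.inl h0.symm
  rcases hw.2.eq_or_lt with h1 | h1
  · exact Or.inr h1
  exact absurd ⟨h0, h1⟩ hi

lemma exists_ne_zero_sum_mul_eq_zero {κ : Type*} [Fintype κ] (c : κ → ι → ℝ) {F : Finset ι}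
    (hF : Fintype.card κ < F.card) :
    ∃ v : ι → ℝ, v ≠ 0 ∧ (∀ i ∉ F, v i = 0) ∧ ∀ s, ∑ i, c s i * v i = 0 := by
  have hdep : ¬LinearIndependent ℝ fun i : F => fun s => c s i := fun h => by
    have := h.fintype_card_le_finrank
    simp only [Fintype.card_coe, Module.finrank_fintype_fun_eq_card] at this
    omega
  obtain ⟨u, hu, j, hj⟩ := Fintype.not_linearIndependent_iff.1 hdep
  refine ⟨fun i => if h : i ∈ F then u ⟨i, h⟩ else 0, fun h => hj ?_, fun i hi => dif_neg hi,
    fun s => ?_⟩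
  · simpa using congrFun h j
  · rw [← sum_subset (subset_univ F) fun i _ hi => by simp [hi], ← sum_coe_sort F]
    simpa [mul_comm] using congrFun hu s

lemma exists_fracSupport_ssubset {w v : ι → ℝ} (hw : ∀ i, w i ∈ Set.Icc 0 1)
    (hv : ∀ i ∉ fracSupport w, v i = 0) (hv₀ : v ≠ 0) :
    ∃ t : ℝ, (∀ i, w i + t * v i ∈ Set.Icc 0 1) ∧
      fracSupport (fun i => w i + t * v i) ⊂ fracSupport w := by
  have hsupp : ∀ i, v i ≠ 0 → i ∈ fracSupport w := fun i h => by_contra fun hi => h (hv i hi)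
  obtain ⟨j, hj⟩ := Function.ne_iff.1 hv₀
  -- move along `v` until the first coordinate reaches the boundary of `[0, 1]`
  obtain ⟨i₀, hi₀, hmin⟩ := (univ.filter fun i => v i ≠ 0).exists_min_image
    (fun i => exitTime (w i) (v i)) ⟨j, by simpa using hj⟩
  simp only [mem_filter, mem_univ, true_and] at hi₀ hmin
  have ht := exitTime_pos (mem_fracSupport.1 (hsupp i₀ hi₀)) hi₀
  refine ⟨exitTime (w i₀) (v i₀), fun i => ?_, ?_⟩
  · by_cases hi : v i = 0
    · simpa [hi] using hw i
    · exact add_mul_mem_Icc_of_le_exitTime (hw i) hi ht.le (hmin i hi)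
  refine Finset.ssubset_of_subset_of_ssubset (fun i hi => mem_erase.2 ⟨?_, ?_⟩)
    (erase_ssubset (hsupp i₀ hi₀))
  · rintro rfl
    exact add_exitTime_mul_notMem_Ioo (w i) hi₀ (mem_fracSupport.1 hi :)
  · by_cases hvi : v i = 0
    · simpa [hvi] using hi
    · exact hsupp i hvi

theorem exists_card_fracSupport_le {κ : Type*} [Fintype κ] (c : κ → ι → ℝ) (w₀ : ι → ℝ)
    (hw₀ : ∀ i, w₀ i ∈ Set.Icc 0 1) :
    ∃ w : ι → ℝ, (∀ i, w i ∈ Set.Icc 0 1) ∧ (∀ i ∉ fracSupport w₀, w i = w₀ i) ∧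
      (∀ s, ∑ i, c s i * w i = ∑ i, c s i * w₀ i) ∧ (fracSupport w).card ≤ Fintype.card κ := by
  induction hN : (fracSupport w₀).card using Nat.strong_induction_on generalizing w₀ with
  | _ N ih =>
  by_cases hsmall : N ≤ Fintype.card κ
  · exact ⟨w₀, hw₀, fun _ _ => rfl, fun _ => rfl, hN ▸ hsmall⟩
  obtain ⟨v, hv₀, hv, hcv⟩ := exists_ne_zero_sum_mul_eq_zero c (F := fracSupport w₀) (by omega)
  obtain ⟨t, hw₁, hss⟩ := exists_fracSupport_ssubset hw₀ hv hv₀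
  obtain ⟨w, hw, hoff, hc, hcard⟩ := ih _ (hN ▸ card_lt_card hss) _ hw₁ rfl
  refine ⟨w, hw, fun i hi => ?_, fun s => ?_, hcard⟩
  · rw [hoff i fun h => hi (hss.subset h), hv i hi, mul_zero, add_zero]
  · have hmove : ∑ i, c s i * (t * v i) = t * ∑ i, c s i * v i := by
      rw [mul_sum]
      exact sum_congr rfl fun i _ => by ring
    rw [hc s]
    simp only [mul_add, sum_add_distrib, hmove, hcv s, mul_zero, add_zero]

lemma eq_zero_or_eq_one_of_card_fracSupport_le_one {w : ι → ℝ} (hw : ∀ i, w i ∈ Set.Icc 0 1)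
    {q : ℕ} (hq : ∑ i, w i = q) (h : (fracSupport w).card ≤ 1) (i : ι) : w i = 0 ∨ w i = 1 := by
  by_contra hi
  have hi' : i ∈ fracSupport w :=
    by_contra fun h' => hi (eq_zero_or_eq_one_of_notMem_fracSupport (hw i) h')
  -- `w i` is `q` minus a sum of zeros and ones, hence an integer
  have hint : w i ∈ (⊥ : Subring ℝ) := by
    have hrest : w i = q - ∑ j ∈ univ.erase i, w j := by
      rw [← hq, ← add_sum_erase _ _ (mem_univ i)]
      ring
    rw [hrest]
    refine sub_mem (natCast_mem _ q) (sum_mem fun j hj => ?_)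
    have hj' : j ∉ fracSupport w := fun hj' => ne_of_mem_erase hj (card_le_one.1 h j hj' i hi')
    rcases eq_zero_or_eq_one_of_notMem_fracSupport (hw j) hj' with h0 | h1
    · exact h0 ▸ zero_mem _
    · exact h1 ▸ one_mem _
  obtain ⟨m, hm⟩ := Subring.mem_bot.1 hint
  rw [mem_fracSupport, ← hm] at hi'
  have h0 : (0 : ℤ) < m := by exact_mod_cast hi'.1
  have h1 : m < (1 : ℤ) := by exact_mod_cast hi'.2
  omega

lemma abs_sum_sub_mul_le_sum_abs {w w₀ : ι → ℝ} (hw : ∀ i, w i ∈ Set.Icc 0 1)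
    (hw₀ : ∀ i, w₀ i ∈ Set.Icc 0 1) {F : Finset ι} (hoff : ∀ i ∉ F, w i = w₀ i) (d : ι → ℝ) :
    |∑ i, (w i - w₀ i) * d i| ≤ ∑ i ∈ F, |d i| := by
  rw [← sum_subset (subset_univ F) fun i _ hi => by rw [hoff i hi, sub_self, zero_mul]]
  refine (abs_sum_le_sum_abs _ _).trans (sum_le_sum fun i _ => ?_)
  rw [abs_mul]
  refine mul_le_of_le_one_left (abs_nonneg _) (abs_sub_le_iff.2 ⟨?_, ?_⟩)
  · linarith [(hw i).2, (hw₀ i).1]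
  · linarith [(hw i).1, (hw₀ i).2]

end Rounding

section Discrepancy

variable {ι α : Type*} [Fintype ι] [LinearOrder α] {g : ι → α → ℝ}

lemma exists_rounding_step (hg : ∀ i, Monotone (g i)) (hg₀₁ : ∀ i x, g i x ∈ Set.Icc 0 1)
    {w₀ : ι → ℝ} (hw₀ : ∀ i, w₀ i ∈ Set.Icc 0 1) :
    ∃ w : ι → ℝ, (∀ i, w i ∈ Set.Icc 0 1) ∧ ∑ i, w i = ∑ i, w₀ i ∧
      (fracSupport w).card ≤ (fracSupport w₀).card / 4 + 2 ∧
      ∀ x, |∑ i, (w i - w₀ i) * g i x| ≤ 4 := by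
  set F := fracSupport w₀
  have hmass : ∀ x, (∑ i ∈ F, g i x) / 4 ∈ Set.Ico 0 (((F.card / 4 : ℕ) : ℝ) + 1) := fun x => by
    have hle : ∑ i ∈ F, g i x ≤ F.card := by
      simpa using sum_le_sum fun i (_ : i ∈ F) => (hg₀₁ i x).2
    have hlt : (F.card : ℝ) < 4 * ((F.card / 4 : ℕ) + 1) := by exact_mod_cast (by omega)
    exact ⟨by positivity [sum_nonneg fun i (_ : i ∈ F) => (hg₀₁ i x).1], by linarith⟩
  obtain ⟨T, hT, hcover⟩ := exists_finset_abs_sub_lt_one _ _ hmass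
  obtain ⟨w, hw, hoff, hc, hcard⟩ :=
    exists_card_fracSupport_le (fun (s : Option T) i => s.elim 1 fun t => g i t) w₀ hw₀
  refine ⟨w, hw, by simpa using hc none, hcard.trans (by simpa using hT), fun x => ?_⟩
  obtain ⟨t, ht, hxt⟩ := hcover x
  have hct : ∑ i, (w i - w₀ i) * g i t = 0 := by
    simp only [sub_mul, sum_sub_distrib, sub_eq_zero]
    simpa [mul_comm] using hc (some ⟨t, ht⟩)
  calc |∑ i, (w i - w₀ i) * g i x| = |∑ i, (w i - w₀ i) * (g i x - g i t)| := by
        simp [mul_sub, sum_sub_distrib, hct]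
    _ ≤ ∑ i ∈ F, |g i x - g i t| := abs_sum_sub_mul_le_sum_abs hw hw₀ hoff _
    _ = |∑ i ∈ F, g i x - ∑ i ∈ F, g i t| := sum_abs_sub_eq_abs_sum_sub hg F x t
    _ ≤ 4 := by
        rw [← sub_div, abs_div, abs_of_pos (by norm_num : (0 : ℝ) < 4)] at hxt
        linarith

theorem exists_rounding_abs_sum_sub_mul_le (hg : ∀ i, Monotone (g i))
    (hg₀₁ : ∀ i x, g i x ∈ Set.Icc 0 1) (q : ℕ) (w₀ : ι → ℝ) (hw₀ : ∀ i, w₀ i ∈ Set.Icc 0 1)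
    (hq : ∑ i, w₀ i = q) :
    ∃ w : ι → ℝ, (∀ i, w i = 0 ∨ w i = 1) ∧ ∑ i, w i = q ∧
      ∀ x, |∑ i, (w i - w₀ i) * g i x| ≤ 4 * Nat.log 2 (fracSupport w₀).card + 7 := by
  induction hN : (fracSupport w₀).card using Nat.strong_induction_on generalizing w₀ with
  | _ N ih =>
  by_cases hN₈ : N < 8
  · obtain ⟨w, hw, hoff, hc, hcard⟩ :=
      exists_card_fracSupport_le (fun (_ : Unit) (_ : ι) => (1 : ℝ)) w₀ hw₀
    have hsum : ∑ i, w i = q := by simpa [hq] using hc ()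
    refine ⟨w, eq_zero_or_eq_one_of_card_fracSupport_le_one hw hsum (by simpa using hcard), hsum,
      fun x => ?_⟩
    calc |∑ i, (w i - w₀ i) * g i x| ≤ ∑ i ∈ fracSupport w₀, |g i x| :=
          abs_sum_sub_mul_le_sum_abs hw hw₀ hoff _
      _ ≤ ∑ i ∈ fracSupport w₀, 1 :=
          sum_le_sum fun i _ => (abs_of_nonneg (hg₀₁ i x).1).trans_le (hg₀₁ i x).2
      _ ≤ 4 * Nat.log 2 N + 7 := by
          have : (N : ℝ) ≤ 7 := by exact_mod_cast (by omega : N ≤ 7)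
          simp only [sum_const, hN, nsmul_eq_mul, mul_one]
          linarith [(Nat.log 2 N).cast_nonneg (α := ℝ)]
  · obtain ⟨w₁, hw₁, hsum₁, hcard₁, herr₁⟩ := exists_rounding_step hg hg₀₁ hw₀
    obtain ⟨w, hw, hsum, herr⟩ := ih _ (by omega) w₁ hw₁ (hsum₁.trans hq) rfl
    have hlog : Nat.log 2 (fracSupport w₁).card + 1 ≤ Nat.log 2 N := by
      have h₁ := Nat.log_mono_right (b := 2) (show (fracSupport w₁).card ≤ N / 2 by omega)
      have h₂ := Nat.log_div_base 2 N
      have h₃ : 0 < Nat.log 2 N := Nat.log_pos (by norm_num) (by omega)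
      omega
    refine ⟨w, hw, hsum, fun x => ?_⟩
    have hsplit : ∑ i, (w i - w₀ i) * g i x
        = ∑ i, (w i - w₁ i) * g i x + ∑ i, (w₁ i - w₀ i) * g i x := by
      rw [← sum_add_distrib]
      exact sum_congr rfl fun i _ => by ring
    have hlogR : (Nat.log 2 (fracSupport w₁).card : ℝ) + 1 ≤ Nat.log 2 N := by exact_mod_cast hlog
    calc |∑ i, (w i - w₀ i) * g i x|
        ≤ (4 * Nat.log 2 (fracSupport w₁).card + 7) + 4 :=
          hsplit ▸ (abs_add_le _ _).trans (add_le_add (herr x) (herr₁ x))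
      _ ≤ 4 * Nat.log 2 N + 7 := by linarith

end Discrepancy

lemma probIn_mem_Icc {α : Type*} {k : ℕ} (p : Fin k → α) (r : Set α) :
    probIn p r ∈ Set.Icc 0 1 :=
  ⟨by unfold probIn; positivity,
    div_le_one_of_le₀ (by exact_mod_cast (card_filter_le _ _).trans (by simp)) k.cast_nonneg⟩

lemma monotone_probIn_Iic {k : ℕ} (p : Fin k → ℝ) : Monotone fun x => probIn p (Set.Iic x) :=
  fun _ _ hxy => div_le_div_of_nonneg_right (by
    exact_mod_cast card_le_card (monotone_filter_right _ fun _ _ h => le_trans h hxy)) k.cast_nonneg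

lemma card_Pplus_eq_sum {n : ℕ} {χ : Fin n → ℤ} {w : Fin n → ℝ}
    (hw : ∀ i, w i = if χ i = 1 then 1 else 0) : ((Pplus χ).card : ℝ) = ∑ i, w i := by
  simp [Pplus, hw]

lemma REdisc_eq_mul_abs_sum {α : Type*} {n k : ℕ} (P : Fin n → Fin k → α) {χ : Fin n → ℤ}
    (r : Set α) {w : Fin n → ℝ} (hw : ∀ i, w i = if χ i = 1 then 1 else 0)
    (hχ : (Pplus χ).Nonempty) :
    REdisc P χ r =
      n / (Pplus χ).card * |∑ i, (w i - (Pplus χ).card / n) * probIn (P i) r| := by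
  have hq : (0 : ℝ) < (Pplus χ).card := by exact_mod_cast hχ.card_pos
  have hn : (0 : ℝ) < n := by
    have := (card_le_univ (Pplus χ)).trans_lt' hχ.card_pos
    simp only [Fintype.card_fin] at this
    exact_mod_cast this
  have hplus : ∑ i ∈ Pplus χ, probIn (P i) r = ∑ i, w i * probIn (P i) r := by
    simp [Pplus, sum_filter, hw]
  unfold REdisc REexp
  rw [hplus, card_univ, Fintype.card_fin]
  simp only [sub_mul, sum_sub_distrib, ← mul_sum]
  set A := ∑ i, w i * probIn (P i) r
  set B := ∑ i, probIn (P i) r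
  have hdiff : A / (Pplus χ).card - B / n = (A - (Pplus χ).card / n * B) / (Pplus χ).card := by
    field_simp
  rw [hdiff, abs_div, abs_of_pos hq]
  ring

lemma natLog_two_add_one_le {n : ℕ} (hn : 2 ≤ n) : (Nat.log 2 n : ℝ) + 1 ≤ 3 * Real.log n := by
  have hlog₂ : 2 / 3 < Real.log 2 := by linarith [Real.log_two_gt_d9]
  have hlog : Real.log 2 ≤ Real.log n := Real.log_le_log two_pos (by exact_mod_cast hn)
  have hL : (Nat.log 2 n : ℝ) ≤ Real.log n / Real.log 2 := by
    simpa [Real.logb] using Real.natLog_le_logb n 2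
  have hL' : Real.log n / Real.log 2 ≤ 3 / 2 * Real.log n := by
    rw [div_le_iff₀ (by linarith)]
    nlinarith
  have h1 : (1 : ℝ) ≤ Real.log n / Real.log 2 := by
    rw [le_div_iff₀ (by linarith)]
    linarith
  linarith

/-- There is an absolute constant `C > 0` such that for every uncertain
point set `P` of `n ≥ 2` points each with `k` locations in `ℝ¹`,
`RE-disc(P, 𝓘₊) ≤ C √k log n`; i.e., there is a balanced `±1` coloring `χ`
(`|P_χ^+| = ⌊n/2⌋`) with `RE-disc_χ(P, r) ≤ C √k log n` for all ranges `r ∈ 𝓘₊`. -/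
theorem stmt6 :
    ∃ C : ℝ, 0 < C ∧
      ∀ (n k : ℕ) (P : Fin n → Fin k → ℝ), 2 ≤ n → 0 < k →
        ∃ χ : Fin n → ℤ, (∀ i, χ i = 1 ∨ χ i = -1) ∧ (Pplus χ).card = n / 2 ∧
          ∀ r ∈ IicFam, REdisc P χ r ≤ C * Real.sqrt k * Real.log n := by
  refine ⟨63, by norm_num, fun n k P hn hk => ?_⟩
  have hn₀ : (0 : ℝ) < n := by positivity
  have hq : 0 < n / 2 := by omega
  obtain ⟨w, hw₀₁, hwsum, herr⟩ := exists_rounding_abs_sum_sub_mul_le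
    (fun i => monotone_probIn_Iic (P i)) (fun i _ => probIn_mem_Icc (P i) _) (n / 2)
    (fun _ => ((n / 2 : ℕ) : ℝ) / n)
    (fun _ => ⟨by positivity, div_le_one_of_le₀ (by exact_mod_cast n.div_le_self 2) hn₀.le⟩)
    (by simp [mul_div_cancel₀ _ hn₀.ne'])
  let χ : Fin n → ℤ := fun i => if w i = 1 then 1 else -1
  have hw : ∀ i, w i = if χ i = 1 then 1 else 0 := fun i => by
    rcases hw₀₁ i with h | h <;> simp [χ, h]
  have hcard : (Pplus χ).card = n / 2 := by exact_mod_cast (card_Pplus_eq_sum hw).trans hwsum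
  refine ⟨χ, fun i => by by_cases h : w i = 1 <;> simp [χ, h], hcard, ?_⟩
  rintro _ ⟨x, rfl⟩
  have hratio : (n : ℝ) / (n / 2 : ℕ) ≤ 3 := by
    rw [div_le_iff₀ (by exact_mod_cast hq)]
    exact_mod_cast (by omega : n ≤ 3 * (n / 2))
  have hlog : (Nat.log 2 (fracSupport fun _ : Fin n => ((n / 2 : ℕ) : ℝ) / n).card : ℝ) ≤
      Nat.log 2 n := by
    exact_mod_cast Nat.log_mono_right ((card_le_univ _).trans (Fintype.card_fin n).le)
  have hsqrt : 1 ≤ Real.sqrt k := Real.one_le_sqrt.2 (by exact_mod_cast hk)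
  rw [REdisc_eq_mul_abs_sum P _ hw (card_pos.1 (hcard ▸ hq)), hcard]
  calc (n : ℝ) / (n / 2 : ℕ) * |∑ i, (w i - ((n / 2 : ℕ) : ℝ) / n) * probIn (P i) (Set.Iic x)|
      ≤ 3 * (4 * Nat.log 2 n + 7) :=
        mul_le_mul hratio ((herr x).trans (by linarith)) (abs_nonneg _) (by norm_num)
    _ ≤ 63 * Real.log n := by linarith [natLog_two_add_one_le hn]
    _ ≤ 63 * Real.sqrt k * Real.log n := by
        nlinarith [Real.log_nonneg (by exact_mod_cast hn.trans' one_le_two : (1 : ℝ) ≤ n)]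

end
end

section
/- Let p_i be an uncertain point in ℝ¹ with k distinct locations sorted so that p_{i,1} < p_{i,2} < … < p_{i,k}, each taken with probability 1/k, and set p_{i,k+1} = +∞ (a value larger than every query endpoint). Fix t ∈ {1, …, k} and define for each j with t ≤ j ≤ k the lifted point p̄^t_{i,j} = (p_{i,j−t+1}, p_{i,j}, p_{i,j+1}) ∈ ℝ³, with p̄^t_i the set of all such lifted points. For a query interval r = [a,b], let r̄ = [a,∞) × (−∞,b] × (b,∞) ⊆ ℝ³. Then: (i) p_i lies in [a,b] with probability at least t/k if and only if |p̄^t_i ∩ r̄| ≥ 1; and (ii) at most one lifted point of p̄^t_i lies in r̄. -/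
open Finset
open scoped Classical

noncomputable section

/-- The lifted point `p̄^t_{i,j} = (p_{j-t+1}, p_j, p_{j+1}) ∈ ℝ³` (in `0`-indexed form:
index `j` maps to `(p (j-(t-1)), p j, p (j+1))`), where the sentinel `η` plays the role
of `p_{i,k+1} = +∞`. -/
def liftPt {k : ℕ} (p : Fin k → ℝ) (t : ℕ) (η : ℝ) (j : Fin k) : ℝ × ℝ × ℝ :=
  (p ⟨(j : ℕ) - (t - 1), lt_of_le_of_lt (Nat.sub_le _ _) j.isLt⟩, p j,
    if h : (j : ℕ) + 1 < k then p ⟨(j : ℕ) + 1, h⟩ else η)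

/-- `p̄^t_i`: the set of all lifted points of the uncertain point `p`, one for each index
`j` with `t ≤ j ≤ k` (in `1`-indexed terms). -/
def liftSet {k : ℕ} (p : Fin k → ℝ) (t : ℕ) (η : ℝ) : Finset (ℝ × ℝ × ℝ) :=
  (Finset.univ.filter fun j : Fin k => t ≤ (j : ℕ) + 1).image (liftPt p t η)

/-- Membership in the lifted range `r̄ = [a, ∞) × (-∞, b] × (b, ∞) ⊆ ℝ³`. -/
def inBar (a b : ℝ) (y : ℝ × ℝ × ℝ) : Prop :=
  a ≤ y.1 ∧ y.2.1 ≤ b ∧ b < y.2.2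

/-- For an uncertain point with `k` distinct sorted locations and
sentinel `η` exceeding the right endpoint `b` of the query interval `[a, b]`:
(i) the point lies in `[a, b]` with probability at least `t/k` iff at least one lifted
point of `p̄^t_i` lies in `r̄`; and (ii) at most one lifted point of `p̄^t_i` lies in `r̄`. -/
theorem stmt12 {k : ℕ} (p : Fin k → ℝ) (hp : StrictMono p)
    (t : ℕ) (ht1 : 1 ≤ t) (htk : t ≤ k) (a b η : ℝ) (hη : b < η) :
    ((t : ℝ) / k ≤ probIn p (Set.Icc a b) ↔
      1 ≤ ((liftSet p t η).filter (inBar a b)).card) ∧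
    ((liftSet p t η).filter (inBar a b)).card ≤ 1 := by
  have hk : 0 < k := lt_of_lt_of_le ht1 htk
  have hkR : (0 : ℝ) < k := by exact_mod_cast hk
  set S : Finset (Fin k) := @Finset.filter _ (fun j : Fin k => p j ∈ Set.Icc a b) (fun _ => Classical.propDecidable _) Finset.univ with hSdef
  have memS : ∀ j : Fin k, j ∈ S ↔ a ≤ p j ∧ p j ≤ b := by
    intro j; simp [hSdef, Set.mem_Icc]
  -- key: if the lifted point of j is in r̄, every later location exceeds b
  have key : ∀ j j' : Fin k, j < j' → inBar a b (liftPt p t η j) → b < p j' := by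
    intro j j' hjj' hj
    obtain ⟨_, _, h3⟩ := hj
    have h1k : (j : ℕ) + 1 < k := lt_of_le_of_lt (Nat.succ_le_of_lt hjj') j'.isLt
    rw [liftPt] at h3
    simp only [dif_pos h1k] at h3
    exact lt_of_lt_of_le h3 (hp.monotone (show (⟨(j : ℕ) + 1, h1k⟩ : Fin k) ≤ j' from
      Nat.succ_le_of_lt hjj'))
  have uniq : ∀ j j' : Fin k, inBar a b (liftPt p t η j) → inBar a b (liftPt p t η j') →
      j = j' := by
    intro j j' hj hj'
    rcases lt_trichotomy j j' with h | h | h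
    · exact absurd hj'.2.1 (not_le.mpr (key _ _ h hj))
    · exact h
    · exact absurd hj.2.1 (not_le.mpr (key _ _ h hj'))
  have hle1 : ((liftSet p t η).filter (inBar a b)).card ≤ 1 := by
    apply Finset.card_le_one.mpr
    intro y hy z hz
    simp only [liftSet, Finset.mem_filter, Finset.mem_image] at hy hz
    obtain ⟨⟨j, hj, rfl⟩, hyB⟩ := hy
    obtain ⟨⟨j', hj', rfl⟩, hzB⟩ := hz
    rw [uniq j j' hyB hzB]
  refine ⟨?_, hle1⟩
  have hprob : probIn p (Set.Icc a b) = (S.card : ℝ) / k := by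
    rfl
  rw [hprob, div_le_div_iff_of_pos_right hkR, Nat.cast_le]
  constructor
  · -- forward: t ≤ |S| → some lifted point in r̄
    intro htc
    have hSne : S.Nonempty := Finset.card_pos.mp (lt_of_lt_of_le ht1 htc)
    set m := S.max' hSne with hm
    set mn := S.min' hSne with hmn
    have hmS : m ∈ S := S.max'_mem hSne
    have hmnS : mn ∈ S := S.min'_mem hSne
    have hsub : S ⊆ Finset.Icc mn m := by
      intro x hx
      exact Finset.mem_Icc.mpr ⟨S.min'_le x hx, S.le_max' x hx⟩
    have hcard : S.card ≤ (m : ℕ) + 1 - (mn : ℕ) := by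
      calc S.card ≤ (Finset.Icc mn m).card := Finset.card_le_card hsub
        _ = (m : ℕ) + 1 - (mn : ℕ) := Fin.card_Icc mn m
    have harith : (mn : ℕ) + (t - 1) ≤ (m : ℕ) := by omega
    -- the interval property of S
    have hinterval : ∀ j : Fin k, mn ≤ j → j ≤ m → j ∈ S := by
      intro j h1 h2
      rw [memS]
      exact ⟨le_trans ((memS mn).mp hmnS).1 (hp.monotone h1),
        le_trans (hp.monotone h2) ((memS m).mp hmS).2⟩
    set j₀ : Fin k := ⟨(m : ℕ) - (t - 1), lt_of_le_of_lt (Nat.sub_le _ _) m.isLt⟩ with hj₀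
    have hj₀S : j₀ ∈ S := by
      apply hinterval
      · show (mn : ℕ) ≤ (m : ℕ) - (t - 1); omega
      · show (m : ℕ) - (t - 1) ≤ (m : ℕ); omega
    rw [Nat.one_le_iff_ne_zero, ← Nat.pos_iff_ne_zero, Finset.card_pos]
    refine ⟨liftPt p t η m, Finset.mem_filter.mpr ⟨?_, ?_, ?_, ?_⟩⟩
    · refine Finset.mem_image.mpr ⟨m, Finset.mem_filter.mpr ⟨Finset.mem_univ _, ?_⟩, rfl⟩
      omega
    · exact ((memS j₀).mp hj₀S).1
    · exact ((memS m).mp hmS).2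
    · show b < if h : (m : ℕ) + 1 < k then p ⟨(m : ℕ) + 1, h⟩ else η
      split_ifs with h
      · by_contra hb
        push_neg at hb
        have hmem : (⟨(m : ℕ) + 1, h⟩ : Fin k) ∈ S := by
          rw [memS]
          exact ⟨le_trans ((memS m).mp hmS).1 (le_of_lt (hp (by exact Nat.lt_succ_self _))),
            hb⟩
        have := S.le_max' _ hmem
        rw [← hm] at this
        exact absurd this (by simp [Fin.le_def])
      · exact hη
  · -- backward: some lifted point in r̄ → t ≤ |S|
    intro hcard
    obtain ⟨y, hy⟩ := Finset.card_pos.mp (lt_of_lt_of_le one_pos hcard)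
    rw [Finset.mem_filter] at hy
    obtain ⟨hy1, hyB⟩ := hy
    simp only [liftSet, Finset.mem_image, Finset.mem_filter, Finset.mem_univ, true_and] at hy1
    obtain ⟨j, hjt, rfl⟩ := hy1
    obtain ⟨hB1, hB2, _⟩ := hyB
    set j₀ : Fin k := ⟨(j : ℕ) - (t - 1), lt_of_le_of_lt (Nat.sub_le _ _) j.isLt⟩ with hj₀
    have hsub : Finset.Icc j₀ j ⊆ S := by
      intro x hx
      rw [Finset.mem_Icc] at hx
      rw [memS]
      exact ⟨le_trans hB1 (hp.monotone hx.1), le_trans (hp.monotone hx.2) hB2⟩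
    calc t = (j : ℕ) + 1 - ((j : ℕ) - (t - 1)) := by omega
      _ = (Finset.Icc j₀ j).card := (Fin.card_Icc j₀ j).symm
      _ ≤ S.card := Finset.card_le_card hsub

end
end

section
/- Let P be an uncertain point set of n points in ℝ¹, each with k distinct sorted locations taken with probability 1/k, fix t ∈ {1, …, k}, and for each uncertain point form the lifted set p̄^t_i ⊆ ℝ³ (with p̄^t_{i,j} = (p_{i,j−t+1}, p_{i,j}, p_{i,j+1}) for t ≤ j ≤ k and sentinel p_{i,k+1} = +∞); let P̄^t = ∪_i p̄^t_i. Then for every interval r = [a,b], with r̄^t = [a,∞) × (−∞,b] × (b,∞), one has G_{P,r}(t/k) = |P̄^t ∩ r̄^t| / n. -/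
open Finset
open scoped Classical

noncomputable section

/-- `G_{S,r}(τ)`: the fraction of the uncertain points indexed by `S` that lie in `r`
with probability at least `τ`. -/
def Gfun {α : Type*} {n k : ℕ} (P : Fin n → Fin k → α) (S : Finset (Fin n)) (r : Set α)
    (τ : ℝ) : ℝ :=
  ((S.filter fun i => τ ≤ probIn (P i) r).card : ℝ) / S.card

/-- `P̄^t = ∪_i p̄^t_i`: the union of the lifted sets of all uncertain points of `P`. -/
def liftAll {n k : ℕ} (P : Fin n → Fin k → ℝ) (t : ℕ) (η : ℝ) : Finset (ℝ × ℝ × ℝ) :=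
  Finset.univ.biUnion fun i : Fin n => liftSet (P i) t η

/-- For an uncertain point set `P` of `n` points in `ℝ¹`, each with `k`
distinct sorted locations, a threshold `t ∈ {1, …, k}`, and a query interval `r = [a, b]`
(whose right endpoint is exceeded by the sentinel `η`),
`G_{P,r}(t/k) = |P̄^t ∩ r̄^t| / n`. -/
theorem stmt13 {n k : ℕ} (hn : 0 < n) (hk : 0 < k) (P : Fin n → Fin k → ℝ)
    (hmono : ∀ i, StrictMono (P i))
    (hinj : Function.Injective fun q : Fin n × Fin k => P q.1 q.2)
    (t : ℕ) (ht1 : 1 ≤ t) (htk : t ≤ k) (a b η : ℝ) (hη : b < η) :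
    Gfun P Finset.univ (Set.Icc a b) ((t : ℝ) / k) =
      (((liftAll P t η).filter (inBar a b)).card : ℝ) / n := by
  classical
  set J : Fin n → Finset (Fin k) :=
    fun i => Finset.univ.filter fun j => P i j ∈ Set.Icc a b with hJ
  have hmemJ : ∀ i (j : Fin k), j ∈ J i ↔ a ≤ P i j ∧ P i j ≤ b := by
    intro i j; simp [hJ, Set.mem_Icc]
  have hk' : (0:ℝ) < (k:ℝ) := Nat.cast_pos.mpr hk
  -- Step 1: rewrite the LHS filter condition
  have hfilter_eq :
      (Finset.univ.filter fun i : Fin n =>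
        (t:ℝ)/k ≤ probIn (P i) (Set.Icc a b))
      = Finset.univ.filter fun i => t ≤ (J i).card := by
    apply Finset.filter_congr
    intro i _
    simp only [probIn, hJ]
    rw [div_le_div_iff_of_pos_right hk']
    norm_cast
    constructor <;> intro h <;> convert h using 3
  -- Step 2: the cardinality bijection
  have hcard : (Finset.univ.filter fun i : Fin n => t ≤ (J i).card).card
      = ((liftAll P t η).filter (inBar a b)).card := by
    -- interval structure of J i
    have hcardIcc : ∀ i (m M : Fin k), m ∈ J i → M ∈ J i →
        (∀ j' ∈ J i, j' ≤ M) → (∀ j' ∈ J i, m ≤ j') →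
        (J i).card ≤ (M:ℕ) + 1 - (m:ℕ) := by
      intro i m M hm hM hMmax hmmin
      have hsub : (J i).image Fin.val ⊆ Finset.Icc (m:ℕ) (M:ℕ) := by
        intro x hx
        simp only [Finset.mem_image] at hx
        obtain ⟨j', hj', rfl⟩ := hx
        exact Finset.mem_Icc.mpr ⟨hmmin j' hj', hMmax j' hj'⟩
      calc (J i).card = ((J i).image Fin.val).card :=
            (Finset.card_image_of_injective _ Fin.val_injective).symm
        _ ≤ (Finset.Icc (m:ℕ) (M:ℕ)).card := Finset.card_le_card hsub
        _ = (M:ℕ) + 1 - (m:ℕ) := Nat.card_Icc _ _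
    apply Finset.card_bij (fun i _ =>
      liftPt (P i) t η ((J i).max' (Finset.card_pos.mp (by
        have := Finset.mem_filter.mp ‹i ∈ Finset.univ.filter fun i => t ≤ (J i).card›
        omega))))
    · -- maps into target
      intro i hi
      have hti : t ≤ (J i).card := (Finset.mem_filter.mp hi).2
      have hne : (J i).Nonempty := Finset.card_pos.mp (by omega)
      set M := (J i).max' hne with hM
      have hMmem : M ∈ J i := (J i).max'_mem hne
      have hMmax : ∀ j' ∈ J i, j' ≤ M := fun j' hj' => (J i).le_max' j' hj'
      set m := (J i).min' hne with hm
      have hmmem : m ∈ J i := (J i).min'_mem hne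
      have hmmin : ∀ j' ∈ J i, m ≤ j' := fun j' hj' => (J i).min'_le j' hj'
      have hcardle := hcardIcc i m M hmmem hMmem hMmax hmmin
      have hmval : (m:ℕ) ≤ (M:ℕ) - (t-1) := by omega
      have htM : t ≤ (M:ℕ) + 1 := by omega
      refine Finset.mem_filter.mpr ⟨?_, ?_, ?_, ?_⟩
      · refine Finset.mem_biUnion.mpr ⟨i, Finset.mem_univ i, ?_⟩
        refine Finset.mem_image.mpr ⟨M, ?_, rfl⟩
        simp [htM]
      · -- a ≤ first coordinate
        have h1 : a ≤ P i m := ((hmemJ i m).mp hmmem).1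
        have h2 : P i m ≤ P i ⟨(M:ℕ) - (t-1), lt_of_le_of_lt (Nat.sub_le _ _) M.isLt⟩ :=
          (hmono i).monotone (by exact hmval)
        exact le_trans h1 h2
      · exact ((hmemJ i M).mp hMmem).2
      · -- b < third coordinate
        show b < if h : (M:ℕ) + 1 < k then P i ⟨(M:ℕ)+1, h⟩ else η
        split
        · rename_i hlt
          by_contra hle
          push_neg at hle
          have hmem' : (⟨(M:ℕ)+1, hlt⟩ : Fin k) ∈ J i := by
            refine (hmemJ i _).mpr ⟨?_, hle⟩
            have : P i M < P i ⟨(M:ℕ)+1, hlt⟩ := hmono i (by simp [Fin.lt_def])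
            exact le_trans ((hmemJ i M).mp hMmem).1 this.le
          have := hMmax _ hmem'
          simp [Fin.le_def] at this
        · exact hη
    · -- injectivity
      intro i₁ h₁ i₂ h₂ heq
      have h2 : P i₁ ((J i₁).max' _) = P i₂ ((J i₂).max' _) :=
        congrArg (fun y => y.2.1) heq
      have h3 := hinj (a₁ := (i₁, _)) (a₂ := (i₂, _)) h2
      exact congrArg Prod.fst h3
    · -- surjectivity
      intro y hy
      rw [Finset.mem_filter] at hy
      obtain ⟨hyl, hbar⟩ := hy
      rw [liftAll, Finset.mem_biUnion] at hyl
      obtain ⟨i, -, hyi⟩ := hyl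
      rw [liftSet, Finset.mem_image] at hyi
      obtain ⟨j, hjmem, rfl⟩ := hyi
      have hjt : t ≤ (j:ℕ) + 1 := by
        simpa using (Finset.mem_filter.mp hjmem).2
      obtain ⟨hb1, hb2, hb3⟩ := hbar
      simp only [liftPt] at hb1 hb2 hb3
      -- all indices in [j - (t-1), j] are in J i
      have hjJ : j ∈ J i := by
        refine (hmemJ i j).mpr ⟨?_, hb2⟩
        refine le_trans hb1 ((hmono i).monotone ?_)
        exact Nat.sub_le _ _
      have hIccsub : Finset.Icc (⟨(j:ℕ) - (t-1),
          lt_of_le_of_lt (Nat.sub_le _ _) j.isLt⟩ : Fin k) j ⊆ J i := by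
        intro j' hj'
        rw [Finset.mem_Icc] at hj'
        refine (hmemJ i j').mpr ⟨le_trans hb1 ((hmono i).monotone hj'.1),
          le_trans ((hmono i).monotone hj'.2) hb2⟩
      have hcardJ : t ≤ (J i).card := by
        have := Finset.card_le_card hIccsub
        rw [Fin.card_Icc] at this
        simp only at this
        omega
      have hiS : i ∈ Finset.univ.filter fun i => t ≤ (J i).card :=
        Finset.mem_filter.mpr ⟨Finset.mem_univ i, hcardJ⟩
      refine ⟨i, hiS, ?_⟩
      -- show the max' of J i is j
      have hne : (J i).Nonempty := ⟨j, hjJ⟩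
      have hmaxle : (J i).max' hne ≤ j := by
        apply Finset.max'_le
        intro j' hj'
        by_contra hgt
        push_neg at hgt
        have hjk : (j:ℕ) + 1 < k := lt_of_le_of_lt (by exact hgt) j'.isLt
        rw [dif_pos hjk] at hb3
        have : P i ⟨(j:ℕ)+1, hjk⟩ ≤ P i j' := (hmono i).monotone (by
          simp [Fin.le_def]; omega)
        have hble : b < P i j' := lt_of_lt_of_le hb3 this
        exact absurd ((hmemJ i j').mp hj').2 (not_le.mpr hble)
      have hmaxeq : (J i).max' hne = j := le_antisymm hmaxle ((J i).le_max' j hjJ)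
      congr 1
  -- conclude
  rw [Gfun, hfilter_eq, hcard]
  simp

end
end

section
/- Let p_i ⊂ ℝ^d be a set of k points and let t be a threshold with 1 ≤ t ≤ k. Then U(C_{i,t}), the union of the positive orthants with apexes in C_{i,t}, can be written as the union of at most k^d pairwise disjoint axis-aligned boxes. -/
open Finset
open scoped Classical

noncomputable section

/-- The negative orthant `Q_a^- = ∏_i (-∞, a_i]` with apex `a`. -/
def negOrth {d : ℕ} (a : Fin d → ℝ) : Set (Fin d → ℝ) := {x | ∀ i, x i ≤ a i}

/-- The positive orthant `Q_a^+ = ∏_i [a_i, ∞)` with apex `a`. -/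
def posOrth {d : ℕ} (a : Fin d → ℝ) : Set (Fin d → ℝ) := {x | ∀ i, a i ≤ x i}

/-- `U(A) = ∪_{a ∈ A} Q_a^+`. -/
def UA {d : ℕ} (A : Set (Fin d → ℝ)) : Set (Fin d → ℝ) := ⋃ a ∈ A, posOrth a

/-- The negative orthant with apex `a` is tight for the point set `p`: each of its `d`
bounding facets contains a point of `p`. -/
def IsTight {k d : ℕ} (p : Fin k → (Fin d → ℝ)) (a : Fin d → ℝ) : Prop :=
  ∀ i, ∃ j, p j ∈ negOrth a ∧ p j i = a i

/-- `C_{i,t}`: the apexes of all tight negative orthants containing exactly `t` points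
of `p`. -/
def Cset {k d : ℕ} (p : Fin k → (Fin d → ℝ)) (t : ℕ) : Set (Fin d → ℝ) :=
  {a | IsTight p a ∧ (Finset.univ.filter fun j => p j ∈ negOrth a).card = t}

/-- An axis-aligned box: a product of `d` intervals, each possibly unbounded. -/
def IsBox {d : ℕ} (s : Set (Fin d → ℝ)) : Prop :=
  ∃ I : Fin d → Set ℝ, (∀ i, (I i).OrdConnected) ∧ s = {x | ∀ i, x i ∈ I i}

/-- The grid cell indexed by `f`: points `x` such that, in each coordinate `i`,
`p (f i) i` is the largest coordinate value (among points of `p`) that is `≤ x i`. -/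
def cellOf {d k : ℕ} (p : Fin k → (Fin d → ℝ)) (f : Fin d → Fin k) : Set (Fin d → ℝ) :=
  {x | ∀ i, p (f i) i ≤ x i ∧ ∀ j, p j i ≤ x i → p j i ≤ p (f i) i}

lemma cellOf_isBox {d k : ℕ} (p : Fin k → (Fin d → ℝ)) (f : Fin d → Fin k) :
    IsBox (cellOf p f) := by
  refine ⟨fun i => {y | p (f i) i ≤ y ∧ ∀ j, p j i ≤ y → p j i ≤ p (f i) i}, ?_, rfl⟩
  intro i
  refine ⟨fun y1 h1 y2 h2 z hz => ?_⟩
  exact ⟨le_trans h1.1 hz.1, fun j hj => h2.2 j (le_trans hj hz.2)⟩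

lemma cellOf_congr {d k : ℕ} (p : Fin k → (Fin d → ℝ)) {f g : Fin d → Fin k}
    (h : ∀ i, p (f i) i = p (g i) i) : cellOf p f = cellOf p g := by
  ext x
  simp only [cellOf, Set.mem_setOf_eq, h]

lemma cellOf_disjoint {d k : ℕ} (p : Fin k → (Fin d → ℝ)) {f g : Fin d → Fin k}
    (h : ¬ ∀ i, p (f i) i = p (g i) i) : Disjoint (cellOf p f) (cellOf p g) := by
  rw [Set.disjoint_left]
  intro x hxf hxg
  apply h
  intro i
  exact le_antisymm ((hxg i).2 _ (hxf i).1) ((hxf i).2 _ (hxg i).1)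

/-- For a set `p` of `k` points in `ℝ^d` and a threshold `1 ≤ t ≤ k`,
`U(C_{i,t})` can be written as the union of at most `k^d` pairwise disjoint
axis-aligned boxes. -/
theorem stmt15 {d k : ℕ} (p : Fin k → (Fin d → ℝ)) (hinj : Function.Injective p)
    (t : ℕ) (ht1 : 1 ≤ t) (htk : t ≤ k) :
    ∃ B : Finset (Set (Fin d → ℝ)), B.card ≤ k ^ d ∧ (∀ s ∈ B, IsBox s) ∧
      (B : Set (Set (Fin d → ℝ))).Pairwise Disjoint ∧
      ⋃₀ (B : Set (Set (Fin d → ℝ))) = UA (Cset p t) := by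
  classical
  set U : Set (Fin d → ℝ) := UA (Cset p t) with hUdef
  set F : Finset (Fin d → Fin k) :=
    Finset.univ.filter (fun f => cellOf p f ⊆ U) with hF
  refine ⟨F.image (cellOf p), ?_, ?_, ?_, ?_⟩
  · calc (F.image (cellOf p)).card ≤ F.card := Finset.card_image_le
      _ ≤ (Finset.univ : Finset (Fin d → Fin k)).card := Finset.card_filter_le _ _
      _ = k ^ d := by simp
  · intro s hs
    obtain ⟨f, -, rfl⟩ := Finset.mem_image.mp hs
    exact cellOf_isBox p f
  · intro s hs u hu hne
    obtain ⟨f, -, rfl⟩ := Finset.mem_image.mp (Finset.mem_coe.mp hs)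
    obtain ⟨g, -, rfl⟩ := Finset.mem_image.mp (Finset.mem_coe.mp hu)
    by_cases hval : ∀ i, p (f i) i = p (g i) i
    · exact absurd (cellOf_congr p hval) hne
    · exact cellOf_disjoint p hval
  · ext x
    constructor
    · rintro ⟨s, hs, hxs⟩
      obtain ⟨f, hfF, rfl⟩ := Finset.mem_image.mp (Finset.mem_coe.mp hs)
      exact (Finset.mem_filter.mp hfF).2 hxs
    · intro hx
      obtain ⟨a, haC, hxa⟩ := Set.mem_iUnion₂.mp hx
      -- For each coordinate, pick the point of `p` whose `i`-th coordinate is the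
      -- largest one `≤ x i`.
      have H : ∀ i, ∃ j, p j i ≤ x i ∧ ∀ j', p j' i ≤ x i → p j' i ≤ p j i := by
        intro i
        obtain ⟨j0, hj0neg, hj0eq⟩ := haC.1 i
        have hj0 : p j0 i ≤ x i := hj0eq ▸ hxa i
        have hne : (Finset.univ.filter (fun j => p j i ≤ x i)).Nonempty :=
          ⟨j0, Finset.mem_filter.mpr ⟨Finset.mem_univ _, hj0⟩⟩
        obtain ⟨j, hjmem, hjmax⟩ :=
          Finset.exists_max_image (Finset.univ.filter (fun j => p j i ≤ x i))
            (fun j => p j i) hne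
        refine ⟨j, (Finset.mem_filter.mp hjmem).2, fun j' hj' => ?_⟩
        exact hjmax j' (Finset.mem_filter.mpr ⟨Finset.mem_univ _, hj'⟩)
      choose f hf1 hf2 using H
      have hxcell : x ∈ cellOf p f := fun i => ⟨hf1 i, hf2 i⟩
      have hsub : cellOf p f ⊆ posOrth a := by
        intro y hy i
        obtain ⟨j0, hj0neg, hj0eq⟩ := haC.1 i
        have h1 : a i ≤ p (f i) i := hj0eq ▸ hf2 i j0 (hj0eq ▸ hxa i)
        exact le_trans h1 (hy i).1
      have hsubU : cellOf p f ⊆ U := fun y hy =>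
        Set.mem_biUnion haC (hsub hy)
      refine ⟨cellOf p f, ?_, hxcell⟩
      exact Finset.mem_coe.mpr (Finset.mem_image_of_mem _
        (Finset.mem_filter.mpr ⟨Finset.mem_univ _, hsubU⟩))

end
end
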